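/- Every cycle C_n (n ≥ 3) is a max point-tolerance graph. Equivalently, the natural cyclic vertex order v_1 < v_2 < ... < v_n of C_n is an MPT-order. -/

import Mathlib

/-!
Represent vertex `v` of `Cₙ` by the point `v` in the interval `[v - 1, v + 1]`, but stretch the
intervals of `0` and `n - 1` to `[-1, n - 1]` and `[0, n]`, so that they contain every point.
The point of `u` then lies in the interval of `v` iff `v` is `0` or `n - 1` or `|u - v| ≤ 1`;
asking this in both directions leaves exactly the path edges `{v, v + 1}` and the closing edge
`{0, n - 1}`.
-/

open SimpleGraph Set

/-- An MPT representation: each vertex gets a pointed interval `([s v, e v], p v)`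
with `p v ∈ [s v, e v]`, and distinct vertices are adjacent iff both
distinguished points lie in both intervals. -/
def IsMPTRep {V : Type*} (G : SimpleGraph V) (s p e : V → ℝ) : Prop :=
  (∀ v, s v ≤ p v ∧ p v ≤ e v) ∧
  ∀ u v : V, u ≠ v →
    (G.Adj u v ↔ p u ∈ Set.Icc (s v) (e v) ∧ p v ∈ Set.Icc (s u) (e u))

/-- A graph is a max point-tolerance (MPT) graph if it has an MPT representation. -/
def IsMPT {V : Type*} (G : SimpleGraph V) : Prop := ∃ s p e, IsMPTRep G s p e

/-- A graph is an interval graph if it is the intersection graph of closed real intervals. -/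
def IsIntervalGraph {V : Type*} (G : SimpleGraph V) : Prop :=
  ∃ s e : V → ℝ, (∀ v, s v ≤ e v) ∧
    ∀ u v : V, u ≠ v →
      (G.Adj u v ↔ (Set.Icc (s u) (e u) ∩ Set.Icc (s v) (e v)).Nonempty)

def IsMPTOrder {V : Type*} [LinearOrder V] (G : SimpleGraph V) : Prop :=
  ∀ u v w x : V, u < v → v < w → w < x → G.Adj u w → G.Adj v x → G.Adj v w

theorem cycleGraph_adj_iff_val {n : ℕ} {u v : Fin n} :
    (cycleGraph n).Adj u v ↔ u ≠ v ∧
      (u.val + 1 = v.val ∨ v.val + 1 = u.val ∨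
        u.val + 1 = n ∧ v.val = 0 ∨ v.val + 1 = n ∧ u.val = 0) := by
  rw [cycleGraph_adj', Ne, Fin.ext_iff]
  rcases lt_trichotomy u v with h | rfl | h
  · rw [Fin.coe_sub_iff_lt.mpr h, Fin.coe_sub_iff_le.mpr h.le]
    omega
  · rw [Fin.coe_sub_iff_le.mpr le_rfl]
    omega
  · rw [Fin.coe_sub_iff_le.mpr h.le, Fin.coe_sub_iff_lt.mpr h]
    omega

-- No two edges cross: an edge `u w` with a vertex strictly between must be `{0, n - 1}`.
theorem cycleGraph_isMPTOrder (n : ℕ) : IsMPTOrder (cycleGraph n) := by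
  intro u v w x huv hvw hwx huw hvx
  rw [cycleGraph_adj_iff_val] at huw hvx ⊢
  rw [Fin.lt_def] at huv hvw hwx
  omega

def cycleMPTStart (n : ℕ) (v : Fin n) : ℤ := if v.val + 1 = n then 0 else v.val - 1

def cycleMPTEnd (n : ℕ) (v : Fin n) : ℤ := if v.val = 0 then n - 1 else v.val + 1

theorem val_mem_cycleMPT_Icc_iff {n : ℕ} (u v : Fin n) :
    (u.val : ℤ) ∈ Icc (cycleMPTStart n v) (cycleMPTEnd n v) ↔
      v.val = 0 ∨ v.val + 1 = n ∨ (u.val ≤ v.val + 1 ∧ v.val ≤ u.val + 1) := by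
  have := u.isLt
  unfold cycleMPTStart cycleMPTEnd
  split_ifs <;> simp only [mem_Icc] <;> omega

theorem val_mem_cycleMPT_Icc {n : ℕ} (v : Fin n) :
    (v.val : ℤ) ∈ Icc (cycleMPTStart n v) (cycleMPTEnd n v) :=
  (val_mem_cycleMPT_Icc_iff v v).mpr (.inr (.inr ⟨by omega, by omega⟩))

theorem isMPTRep_cycleGraph (n : ℕ) :
    IsMPTRep (cycleGraph n) (fun v => cycleMPTStart n v) (fun v => (v.val : ℤ))
      (fun v => cycleMPTEnd n v) := by
  have hcast (a b c : ℤ) : (a : ℝ) ∈ Icc (b : ℝ) c ↔ a ∈ Icc b c := by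
    simp only [mem_Icc, Int.cast_le]
  refine ⟨fun v => (hcast _ _ _).mpr (val_mem_cycleMPT_Icc v), fun u v huv => ?_⟩
  rw [hcast, hcast, val_mem_cycleMPT_Icc_iff, val_mem_cycleMPT_Icc_iff, cycleGraph_adj_iff_val]
  have hne : u.val ≠ v.val := Fin.val_ne_of_ne huv
  omega

theorem cycleGraph_isMPT_general (n : ℕ) :
    IsMPT (SimpleGraph.cycleGraph n) ∧
    ∀ i j k l : Fin n, i < j → j < k → k < l →
      (SimpleGraph.cycleGraph n).Adj i k → (SimpleGraph.cycleGraph n).Adj j l →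
      (SimpleGraph.cycleGraph n).Adj j k :=
  ⟨⟨_, _, _, isMPTRep_cycleGraph n⟩, cycleGraph_isMPTOrder n⟩

/-- Every cycle `Cₙ` (`n ≥ 3`) is an MPT graph; moreover the natural cyclic
vertex order of `Cₙ` is an MPT-order. -/
theorem cycleGraph_isMPT (n : ℕ) (hn : 3 ≤ n) :
    IsMPT (SimpleGraph.cycleGraph n) ∧
    ∀ i j k l : Fin n, i < j → j < k → k < l →
      (SimpleGraph.cycleGraph n).Adj i k → (SimpleGraph.cycleGraph n).Adj j l →
      (SimpleGraph.cycleGraph n).Adj j k :=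
  cycleGraph_isMPT_general n
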